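/- Let $Q$ be the rotation of $\mathbb{R}^2$ by $2\pi/3$. The space of totally symmetric 4-tensors $A \in (\mathbb{R}^2)^{\otimes 4}$ satisfying $Q^{\otimes 4}A = A$ is one-dimensional, spanned by $E_{1111} + E_{2222} + 2\,\mathrm{sym}\,E_{1122}$; equivalently every such $A$ has entries $A_{abcd} = c(\delta_{ab}\delta_{cd} + \delta_{ac}\delta_{bd} + \delta_{ad}\delta_{bc})$ for some scalar $c$. -/

import Mathlib

open Finset Matrix

noncomputable def Qtri : Matrix (Fin 2) (Fin 2) ℝ :=
  !![-(1/2 : ℝ), -(Real.sqrt 3 / 2); Real.sqrt 3 / 2, -(1/2 : ℝ)]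

noncomputable def tpow4 (B : Matrix (Fin 2) (Fin 2) ℝ)
    (A : (Fin 4 → Fin 2) → ℝ) : (Fin 4 → Fin 2) → ℝ :=
  fun l => ∑ k : Fin 4 → Fin 2, A k * ∏ i, B (l i) (k i)

noncomputable def sym4 (A : (Fin 4 → Fin 2) → ℝ) : (Fin 4 → Fin 2) → ℝ :=
  fun l => ((Nat.factorial 4 : ℝ))⁻¹ * ∑ φ : Equiv.Perm (Fin 4), A (l ∘ φ)

def E4 (i j k m : Fin 2) : (Fin 4 → Fin 2) → ℝ :=
  fun l => if l 0 = i ∧ l 1 = j ∧ l 2 = k ∧ l 3 = m then 1 else 0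

noncomputable def T4 : (Fin 4 → Fin 2) → ℝ :=
  E4 0 0 0 0 + E4 1 1 1 1 + (2 : ℝ) • sym4 (E4 0 0 1 1)

/-
A tensor is fixed by `sym4` iff it is invariant under permutations of its indices. Over `Fin 2` such
a tensor depends only on the number `k ∈ {0, …, 4}` of indices equal to `1`, so symmetric tensors
are vectors `a : Fin 5 → ℝ`. Since `Qtri⊗4` commutes with index permutations, it acts on these
vectors by an explicit `5 × 5` matrix with entries in `ℚ(√3)`, whose fixed vectors are the
multiples of `(3, 0, 1, 0, 3)`: the values of `δ_ab δ_cd + δ_ac δ_bd + δ_ad δ_bc`.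
-/

lemma sum_pi_fin_succ {α M : Type*} [Fintype α] [AddCommMonoid M] {n : ℕ}
    (f : (Fin (n + 1) → α) → M) : ∑ k, f k = ∑ a, ∑ t, f (Fin.cons a t) := by
  rw [← (Fin.consEquiv _).sum_comp, Fintype.sum_prod_type]
  rfl

lemma sum_pi_fin_four {α M : Type*} [Fintype α] [AddCommMonoid M] (f : (Fin 4 → α) → M) :
    ∑ k, f k = ∑ a, ∑ b, ∑ c, ∑ d, f ![a, b, c, d] := by
  simp only [sum_pi_fin_succ, Fintype.sum_unique]
  rfl

def IsSymmetricTensor {n : ℕ} {ι R : Type*} (A : (Fin n → ι) → R) : Prop :=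
  ∀ (l : Fin n → ι) (σ : Equiv.Perm (Fin n)), A (l ∘ σ) = A l

lemma sym4_eq_self_iff {A : (Fin 4 → Fin 2) → ℝ} : sym4 A = A ↔ IsSymmetricTensor A := by
  constructor
  · intro h l σ
    have hsum : ∑ τ : Equiv.Perm (Fin 4), A ((l ∘ σ) ∘ τ) = ∑ τ : Equiv.Perm (Fin 4), A (l ∘ τ) :=
      Fintype.sum_equiv (Equiv.mulLeft σ) _ _ fun τ => rfl
    rw [← h]
    simp only [sym4, hsum]
  · intro h
    ext l
    simp only [sym4, h l, sum_const, card_univ, Fintype.card_perm, Fintype.card_fin, nsmul_eq_mul]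
    field_simp

lemma IsSymmetricTensor.tpow4 {A : (Fin 4 → Fin 2) → ℝ} (hA : IsSymmetricTensor A)
    (B : Matrix (Fin 2) (Fin 2) ℝ) : IsSymmetricTensor (tpow4 B A) := by
  intro l σ
  refine Fintype.sum_equiv (σ.arrowCongr (Equiv.refl _)) _ _ fun k => ?_
  show A k * ∏ i, B (l (σ i)) (k i) = A (k ∘ σ.symm) * ∏ i, B (l i) (k (σ.symm i))
  rw [hA, ← Equiv.prod_comp σ fun i => B (l i) (k (σ.symm i))]
  simp only [Equiv.symm_apply_apply]

def numOnes (l : Fin 4 → Fin 2) : Fin 5 :=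
  ⟨∑ i, (l i : ℕ), Nat.lt_succ_of_le <|
    (sum_le_sum fun i _ => Nat.le_of_lt_succ (l i).isLt).trans_eq (by simp)⟩

def stdIdx (k : Fin 5) : Fin 4 → Fin 2 := fun i => if (i : ℕ) + k < 4 then 0 else 1

lemma numOnes_stdIdx : ∀ k, numOnes (stdIdx k) = k := by decide

lemma numOnes_surjective : Function.Surjective numOnes := fun k => ⟨stdIdx k, numOnes_stdIdx k⟩

lemma numOnes_comp_perm (l : Fin 4 → Fin 2) (σ : Equiv.Perm (Fin 4)) :
    numOnes (l ∘ σ) = numOnes l :=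
  Fin.ext (Equiv.sum_comp σ fun i => (l i : ℕ))

lemma exists_perm_comp_eq_stdIdx :
    ∀ l : Fin 4 → Fin 2, ∃ σ : Equiv.Perm (Fin 4), l ∘ σ = stdIdx (numOnes l) := by decide

lemma isSymmetricTensor_iff_exists_comp_numOnes {A : (Fin 4 → Fin 2) → ℝ} :
    IsSymmetricTensor A ↔ ∃ a : Fin 5 → ℝ, A = a ∘ numOnes := by
  constructor
  · intro hA
    refine ⟨fun k => A (stdIdx k), funext fun l => ?_⟩
    obtain ⟨σ, hσ⟩ := exists_perm_comp_eq_stdIdx l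
    rw [Function.comp_apply, ← hσ, hA]
  · rintro ⟨a, rfl⟩ l σ
    simp only [Function.comp_apply, numOnes_comp_perm]

/-- The action of `Qtri⊗4` on symmetric tensors `a ∘ numOnes`: entry `(j, k)` is the sum of
`∏ i, Qtri (stdIdx j i) (k' i)` over the index tuples `k'` with `k` ones. -/
noncomputable def symQtri : Matrix (Fin 5) (Fin 5) ℝ :=
  (16 : ℝ)⁻¹ • !![1, 4 * √3, 18, 12 * √3, 9;
    -√3, -8, -6 * √3, 0, 3 * √3;
    3, 4 * √3, -2, -4 * √3, 3;
    -3 * √3, 0, 6 * √3, -8, √3;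
    9, -12 * √3, 18, -4 * √3, 1]

lemma tpow4_Qtri_comp_numOnes_stdIdx (a : Fin 5 → ℝ) (j : Fin 5) :
    tpow4 Qtri (a ∘ numOnes) (stdIdx j) = (symQtri *ᵥ a) j := by
  have h2 : √3 ^ 2 = 3 := Real.sq_sqrt (by norm_num)
  have h3 : √3 ^ 3 = 3 * √3 := by rw [pow_succ, h2]
  have h4 : √3 ^ 4 = 9 := by rw [pow_succ, h3, mul_assoc, ← sq, h2]; norm_num
  simp only [tpow4, sum_pi_fin_four, Fin.sum_univ_two, Fin.prod_univ_four]
  fin_cases j <;>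
    simp only [Function.comp_apply, numOnes, stdIdx, Qtri, symQtri, mulVec, dotProduct,
      Fin.sum_univ_four, Fin.sum_univ_five, Matrix.smul_apply, smul_eq_mul, of_apply, cons_val',
      cons_val_zero, cons_val_one, Matrix.cons_val, cons_val_fin_one, Fin.isValue,
      Fin.coe_ofNat_eq_mod, Nat.reduceMod, Nat.reduceAdd, Nat.reduceLT,
      ↓reduceIte, Fin.reduceFinMk] <;>
    ring_nf <;> simp only [h2, h3, h4] <;> ring

lemma tpow4_Qtri_comp_numOnes (a : Fin 5 → ℝ) :
    tpow4 Qtri (a ∘ numOnes) = (symQtri *ᵥ a) ∘ numOnes := by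
  obtain ⟨b, hb⟩ := isSymmetricTensor_iff_exists_comp_numOnes.1
    ((isSymmetricTensor_iff_exists_comp_numOnes.2 ⟨a, rfl⟩).tpow4 Qtri)
  rw [hb]
  congr 1
  funext j
  rw [← tpow4_Qtri_comp_numOnes_stdIdx, hb, Function.comp_apply, numOnes_stdIdx]

lemma symQtri_mulVec_eq_self_iff (a : Fin 5 → ℝ) :
    symQtri *ᵥ a = a ↔ ∃ t : ℝ, a = t • ![3, 0, 1, 0, 3] := by
  have h2 : √3 ^ 2 = 3 := Real.sq_sqrt (by norm_num)
  have hs : √3 ≠ 0 := by positivity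
  simp only [funext_iff, Fin.forall_fin_succ, IsEmpty.forall_iff, and_true, mulVec, dotProduct, symQtri, Matrix.smul_apply, of_apply, cons_val', cons_val_fin_one,
    cons_val_zero, cons_val_one, Matrix.cons_val, smul_eq_mul, Fin.sum_univ_five, Fin.isValue,
    Fin.succ_zero_eq_one, Fin.succ_one_eq_two, Fin.reduceSucc, Pi.smul_apply, ↓existsAndEq,
    true_and, neg_mul, mul_neg, mul_one, mul_zero, zero_mul, add_zero]
  constructor
  · rintro ⟨e0, e1, -, e3, e4⟩
    have h1 : √3 * a 1 = (-a 0 - 6 * a 2 + 3 * a 4) / 8 := by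
      linear_combination (-2 * √3 / 3) * e1 - (a 0 + 6 * a 2 - 3 * a 4) / 24 * h2
    have h3 : √3 * a 3 = (-3 * a 0 + 6 * a 2 + a 4) / 8 := by
      linear_combination (-2 * √3 / 3) * e3 - (3 * a 0 - 6 * a 2 - a 4) / 24 * h2
    have h0' : 5 * a 0 = 6 * a 2 + 3 * a 4 := by linear_combination -4 * e0 + h1 + 3 * h3
    have h4' : 5 * a 4 = 3 * a 0 + 6 * a 2 := by linear_combination -4 * e4 - 3 * h1 - h3
    refine ⟨by linarith, ?_, ?_, by linarith⟩
    · exact (mul_eq_zero.1 (h1.trans (by linarith))).resolve_left hs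
    · exact (mul_eq_zero.1 (h3.trans (by linarith))).resolve_left hs
  · rintro ⟨h0, h1, h3, h4⟩
    simp only [h0, h1, h3, h4]
    refine ⟨?_, ?_, ?_, ?_, ?_⟩ <;> ring

def isoTensor {d : ℕ} (l : Fin 4 → Fin d) : ℝ :=
  (if l 0 = l 1 then 1 else 0) * (if l 2 = l 3 then 1 else 0)
    + (if l 0 = l 2 then 1 else 0) * (if l 1 = l 3 then 1 else 0)
    + (if l 0 = l 3 then 1 else 0) * (if l 1 = l 2 then 1 else 0)

lemma isoTensor_eq_comp_numOnes :
    (isoTensor : (Fin 4 → Fin 2) → ℝ) = ![3, 0, 1, 0, 3] ∘ numOnes := by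
  funext l
  obtain ⟨a, b, c, d, rfl⟩ : ∃ a b c d, l = ![a, b, c, d] :=
    ⟨l 0, l 1, l 2, l 3, funext fun i => by fin_cases i <;> rfl⟩
  fin_cases a <;> fin_cases b <;> fin_cases c <;> fin_cases d <;>
    simp [isoTensor, numOnes, Fin.sum_univ_four, ← one_add_one_eq_two, ← two_add_one_eq_three]

lemma card_perm_comp_eq_0011 : ∀ l : Fin 4 → Fin 2,
    #{σ : Equiv.Perm (Fin 4) | l (σ 0) = 0 ∧ l (σ 1) = 0 ∧ l (σ 2) = 1 ∧ l (σ 3) = 1}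
      = if numOnes l = 2 then 4 else 0 := by decide

lemma T4_eq : T4 = (3 : ℝ)⁻¹ • isoTensor := by
  ext l
  have h0 : (l 0 = 0 ∧ l 1 = 0 ∧ l 2 = 0 ∧ l 3 = 0) ↔ numOnes l = 0 := by revert l; decide
  have h4 : (l 0 = 1 ∧ l 1 = 1 ∧ l 2 = 1 ∧ l 3 = 1) ↔ numOnes l = 4 := by revert l; decide
  simp only [T4, E4, sym4, Pi.add_apply, Pi.smul_apply, smul_eq_mul, Function.comp_apply, h0, h4,
    sum_boole, card_perm_comp_eq_0011, isoTensor_eq_comp_numOnes]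
  generalize numOnes l = k
  fin_cases k <;> norm_num [Fin.ext_iff, Nat.factorial]

lemma tpow4_Qtri_eq_self_and_sym4_eq_self_iff (A : (Fin 4 → Fin 2) → ℝ) :
    tpow4 Qtri A = A ∧ sym4 A = A ↔ ∃ c : ℝ, A = c • isoTensor := by
  rw [sym4_eq_self_iff, isSymmetricTensor_iff_exists_comp_numOnes, isoTensor_eq_comp_numOnes]
  constructor
  · rintro ⟨hQ, a, rfl⟩
    rw [tpow4_Qtri_comp_numOnes] at hQ
    obtain ⟨t, rfl⟩ := (symQtri_mulVec_eq_self_iff a).1 (numOnes_surjective.injective_comp_right hQ)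
    exact ⟨t, rfl⟩
  · rintro ⟨t, rfl⟩
    refine ⟨?_, t • ![3, 0, 1, 0, 3], rfl⟩
    exact (tpow4_Qtri_comp_numOnes _).trans
      (congrArg (· ∘ numOnes) ((symQtri_mulVec_eq_self_iff _).2 ⟨t, rfl⟩))

theorem stmt3 :
    {A : (Fin 4 → Fin 2) → ℝ | tpow4 Qtri A = A ∧ sym4 A = A}
      = (Submodule.span ℝ {T4} : Submodule ℝ ((Fin 4 → Fin 2) → ℝ)) ∧
    T4 ≠ 0 ∧
    (∀ A : (Fin 4 → Fin 2) → ℝ, (tpow4 Qtri A = A ∧ sym4 A = A) ↔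
      ∃ c : ℝ, ∀ l : Fin 4 → Fin 2,
        A l = c * ((if l 0 = l 1 then (1:ℝ) else 0) * (if l 2 = l 3 then (1:ℝ) else 0)
          + (if l 0 = l 2 then (1:ℝ) else 0) * (if l 1 = l 3 then (1:ℝ) else 0)
          + (if l 0 = l 3 then (1:ℝ) else 0) * (if l 1 = l 2 then (1:ℝ) else 0))) := by
  have hT4 : Submodule.span ℝ {T4} = Submodule.span ℝ {isoTensor} := by
    rw [T4_eq, Submodule.span_singleton_smul_eq (by norm_num)]
  refine ⟨?_, ?_, fun A => ?_⟩
  · ext A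
    rw [Set.mem_ofPred_eq, tpow4_Qtri_eq_self_and_sym4_eq_self_iff, SetLike.mem_coe, hT4,
      Submodule.mem_span_singleton]
    exact exists_congr fun c => eq_comm
  · rw [T4_eq]
    refine smul_ne_zero (by norm_num) fun h => ?_
    have h0 := congrFun h 0
    norm_num [isoTensor] at h0
  · rw [tpow4_Qtri_eq_self_and_sym4_eq_self_iff]
    exact exists_congr fun c => funext_iff
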